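/- arXiv:1210.8338 — 8 statements merged into one kernel-verified Lean document; each statement's English description precedes it below -/
import Mathlib

section
/- Let 0 < ε ≤ 1 and 0 < δ ≤ 1/2, let μ, μ' be distributions over [n] with variation distance d(μ,μ') ≥ ε, and let k = ⌈(6/ε)·log(1/δ)⌉ (natural logarithm). If i_1, …, i_k are independent random elements of [n], each distributed according to μ' (i.e., drawn from the k-fold product measure of μ'), then with probability at least 1 − δ/3 there exists some 1 ≤ t ≤ k with μ'(i_t) ≥ μ(i_t) + ε/(2n). -/
open Finset MeasureTheory

lemma measure_finset_eq_sum {α : Type*} [MeasurableSpace α] [MeasurableSingletonClass α]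
    (ν : Measure α) (s : Finset α) : ν ↑s = ∑ i ∈ s, ν {i} := by
  rw [show (↑s : Set α) = ⋃ i ∈ s, {i} by ext x; simp]
  exact measure_biUnion_finset (by
    intro a _ b _ hab
    simp [Set.disjoint_singleton, hab]) (fun b _ => measurableSet_singleton b)

/-- If `d(μ,μ') ≥ ε` and `k = ⌈(6/ε)·log(1/δ)⌉`, then `k` independent
samples from `μ'` contain, with probability at least `1 − δ/3`, an element `i` with
`μ'(i) ≥ μ(i) + ε/(2n)`. -/
theorem stmt_3 (n : ℕ) (hn : 0 < n) (ε δ : ℝ) (hε : 0 < ε) (hε1 : ε ≤ 1)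
    (hδ : 0 < δ) (hδ1 : δ ≤ 1 / 2)
    (μ μ' : Fin n → ℝ)
    (hμ0 : ∀ i, 0 ≤ μ i) (hμ1 : ∑ i, μ i = 1)
    (hμ'0 : ∀ i, 0 ≤ μ' i) (hμ'1 : ∑ i, μ' i = 1)
    (hfar : ε ≤ (1 / 2) * ∑ i, |μ i - μ' i|)
    (k : ℕ) (hk : k = ⌈(6 / ε) * Real.log (1 / δ)⌉₊)
    (ν : Measure (Fin n))
    (hν : ∀ i : Fin n, ν {i} = ENNReal.ofReal (μ' i)) :
    ENNReal.ofReal (1 - δ / 3) ≤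
      Measure.pi (fun _ : Fin k => ν)
        {f | ∃ t : Fin k, μ (f t) + ε / (2 * n) ≤ μ' (f t)} := by
  classical
  -- B : good elements
  set B : Finset (Fin n) := univ.filter (fun i => μ i + ε / (2 * n) ≤ μ' i) with hB
  -- combinatorial bound
  have hmax : ε ≤ ∑ i, max (μ' i - μ i) 0 := by
    have h1 : ∑ i, |μ i - μ' i| = 2 * ∑ i, max (μ' i - μ i) 0 - ∑ i, (μ' i - μ i) := by
      rw [Finset.mul_sum, ← Finset.sum_sub_distrib]
      apply Finset.sum_congr rfl
      intro i _
      rw [abs_sub_comm]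
      rcases le_total (μ' i - μ i) 0 with h | h
      · rw [max_eq_right h, abs_of_nonpos h]; ring
      · rw [max_eq_left h, abs_of_nonneg h]; ring
    have h2 : ∑ i, (μ' i - μ i) = 0 := by rw [Finset.sum_sub_distrib, hμ1, hμ'1]; ring
    rw [h1, h2] at hfar; linarith
  have hpB : ε / 2 ≤ ∑ i ∈ B, μ' i := by
    have hsplit : ∑ i, max (μ' i - μ i) 0 = ∑ i ∈ B, max (μ' i - μ i) 0 + ∑ i ∈ Bᶜ, max (μ' i - μ i) 0 := by
      rw [Finset.sum_add_sum_compl]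
    have h3 : ∑ i ∈ B, max (μ' i - μ i) 0 ≤ ∑ i ∈ B, μ' i := by
      apply Finset.sum_le_sum
      intro i _
      exact max_le (by linarith [hμ0 i]) (hμ'0 i)
    have h4 : ∑ i ∈ Bᶜ, max (μ' i - μ i) 0 ≤ ∑ _i ∈ Bᶜ, ε / (2 * n) := by
      apply Finset.sum_le_sum
      intro i hi
      simp only [hB, Finset.mem_compl, Finset.mem_filter, Finset.mem_univ, true_and, not_le] at hi
      have hn' : (0:ℝ) < ε / (2 * n) := by positivity
      exact max_le (by linarith) hn'.le
    have h5 : ∑ _i ∈ Bᶜ, ε / (2 * n) ≤ ε / 2 := by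
      rw [Finset.sum_const, nsmul_eq_mul]
      have hcard : (Bᶜ.card : ℝ) ≤ n := by
        exact_mod_cast (Finset.card_le_card (Finset.subset_univ _)).trans_eq (Finset.card_fin n)
      have h0 : (0:ℝ) < n := by exact_mod_cast hn
      calc (Bᶜ.card : ℝ) * (ε / (2 * n)) ≤ n * (ε / (2 * n)) := by
            apply mul_le_mul_of_nonneg_right hcard; positivity
        _ = ε / 2 := by field_simp
    linarith
  -- q := mass outside B
  set q : ℝ := ∑ i ∈ Bᶜ, μ' i with hq
  have hq0 : 0 ≤ q := Finset.sum_nonneg fun i _ => hμ'0 i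
  have hq1 : q ≤ 1 - ε / 2 := by
    have : ∑ i ∈ B, μ' i + q = 1 := by rw [hq, Finset.sum_add_sum_compl, hμ'1]
    linarith
  -- analytic bound : q ^ k ≤ δ / 3
  have hL : 0 < Real.log (1 / δ) := Real.log_pos (by rw [lt_div_iff₀ hδ]; linarith)
  have hkk : (6 / ε) * Real.log (1 / δ) ≤ (k : ℝ) := hk ▸ Nat.le_ceil _
  have hqk : q ^ k ≤ δ / 3 := by
    have h1 : q ^ k ≤ (1 - ε / 2) ^ k := pow_le_pow_left₀ hq0 hq1 k
    have h2 : (1 - ε / 2) ^ k ≤ Real.exp (-(ε / 2)) ^ k := by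
      apply pow_le_pow_left₀ (by linarith)
      linarith [Real.add_one_le_exp (-(ε / 2))]
    have h3 : Real.exp (-(ε / 2)) ^ k = Real.exp (-(ε / 2) * k) := by
      rw [← Real.exp_nat_mul]; ring_nf
    have h4 : -(ε / 2) * k ≤ -(3 * Real.log (1 / δ)) := by
      have := mul_le_mul_of_nonneg_left hkk (le_of_lt (by positivity : (0:ℝ) < ε / 2))
      have heq : ε / 2 * ((6 / ε) * Real.log (1 / δ)) = 3 * Real.log (1 / δ) := by
        field_simp; ring
      nlinarith
    have h5 : Real.exp (-(3 * Real.log (1 / δ))) = δ ^ 3 := by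
      rw [show -(3 * Real.log (1 / δ)) = (3:ℕ) * Real.log δ by
            rw [Real.log_div one_ne_zero hδ.ne', Real.log_one]; push_cast; ring,
          Real.exp_nat_mul, Real.exp_log hδ]
    have h6 : δ ^ 3 ≤ δ / 3 := by nlinarith [sq_nonneg δ, mul_pos hδ hδ, sq_nonneg (δ - 1/2)]
    calc q ^ k ≤ Real.exp (-(ε / 2) * k) := by rw [← h3]; exact h1.trans h2
      _ ≤ δ ^ 3 := by rw [← h5]; exact Real.exp_le_exp.mpr h4
      _ ≤ δ / 3 := h6
  -- measure theory
  have hν_prob : IsProbabilityMeasure ν := by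
    constructor
    rw [show (Set.univ : Set (Fin n)) = ↑(univ : Finset (Fin n)) by simp,
        measure_finset_eq_sum]
    simp_rw [hν]
    rw [← ENNReal.ofReal_sum_of_nonneg (fun i _ => hμ'0 i), hμ'1, ENNReal.ofReal_one]
  have hνA : ν ↑(Bᶜ) = ENNReal.ofReal q := by
    rw [measure_finset_eq_sum]
    simp_rw [hν]
    rw [← ENNReal.ofReal_sum_of_nonneg (fun i _ => hμ'0 i)]
  -- event as complement of a product set
  have hset : {f : Fin k → Fin n | ∃ t : Fin k, μ (f t) + ε / (2 * n) ≤ μ' (f t)} =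
      (Set.pi Set.univ (fun _ : Fin k => (↑(Bᶜ) : Set (Fin n))))ᶜ := by
    ext f
    simp only [Set.mem_setOf_eq, Set.mem_compl_iff, Set.mem_pi, Set.mem_univ, true_implies,
      Finset.coe_compl, Finset.coe_filter, hB, Set.mem_compl_iff, Set.mem_setOf_eq,
      Finset.mem_univ, true_and]
    push_neg
    simp
  have hpi_prob : IsProbabilityMeasure (Measure.pi (fun _ : Fin k => ν)) := by infer_instance
  have hmeas : MeasurableSet (Set.pi Set.univ (fun _ : Fin k => (↑(Bᶜ) : Set (Fin n)))) :=
    MeasurableSet.univ_pi fun _ => (Bᶜ : Finset (Fin n)).measurableSet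
  rw [hset, prob_compl_eq_one_sub hmeas, Measure.pi_pi]
  simp_rw [hνA]
  rw [Finset.prod_const, Finset.card_univ, Fintype.card_fin, ← ENNReal.ofReal_pow hq0]
  calc ENNReal.ofReal (1 - δ / 3) = 1 - ENNReal.ofReal (δ / 3) := by
        rw [← ENNReal.ofReal_one, ← ENNReal.ofReal_sub _ (by positivity)]
    _ ≤ 1 - ENNReal.ofReal (q ^ k) :=
        tsub_le_tsub_left (ENNReal.ofReal_le_ofReal hqk) 1
end

section
/- Let 0 < ε ≤ 1 and let μ, μ' be distributions over [n] such that |μ(i) − 1/n| < ε/(100n) for every i ∈ [n] and d(μ,μ') ≥ ε. Then the number of indices i ∈ [n] with μ'(i) < μ(i) is at least (ε/2)·n. -/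
open Finset

/-- If `μ` is pointwise within `ε/(100n)` of uniform and
`d(μ,μ') ≥ ε`, then at least `(ε/2)·n` indices `i` satisfy `μ'(i) < μ(i)`. -/
theorem stmt_4 (n : ℕ) (hn : 0 < n) (ε : ℝ) (hε : 0 < ε) (hε1 : ε ≤ 1)
    (μ μ' : Fin n → ℝ)
    (hμ0 : ∀ i, 0 ≤ μ i) (hμ1 : ∑ i, μ i = 1)
    (hμ'0 : ∀ i, 0 ≤ μ' i) (hμ'1 : ∑ i, μ' i = 1)
    (hclose : ∀ i, |μ i - 1 / n| < ε / (100 * n))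
    (hfar : ε ≤ (1 / 2) * ∑ i, |μ i - μ' i|) :
    (ε / 2) * n ≤ ((univ.filter (fun i => μ' i < μ i)).card : ℝ) := by
  have hn' : (0:ℝ) < n := by exact_mod_cast hn
  set S := univ.filter (fun i => μ' i < μ i) with hS
  have hsum0 : ∑ i, (μ i - μ' i) = 0 := by
    rw [Finset.sum_sub_distrib, hμ1, hμ'1]; ring
  have key : (1/2) * ∑ i, |μ i - μ' i| = ∑ i ∈ S, (μ i - μ' i) := by
    rw [hS, Finset.sum_filter]
    have h : ∀ i : Fin n, (if μ' i < μ i then μ i - μ' i else 0)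
        = (|μ i - μ' i| + (μ i - μ' i)) / 2 := by
      intro i
      rcases lt_or_ge (μ' i) (μ i) with h | h
      · rw [if_pos h, abs_of_pos (by linarith)]; ring
      · rw [if_neg (not_lt.2 h), abs_of_nonpos (by linarith)]; ring
    simp_rw [h]
    rw [← Finset.sum_div, Finset.sum_add_distrib, hsum0]
    ring
  have hbound : ∀ i, μ i ≤ 2 / (n:ℝ) := by
    intro i
    have h1 := (abs_lt.1 (hclose i)).2
    have hεn : ε / (100 * n) ≤ 1 / (n:ℝ) := by
      rw [div_le_div_iff₀ (by positivity) hn']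
      nlinarith
    have h2 : (2:ℝ) / n = 1 / n + 1 / n := by ring
    linarith
  have h2 : ε ≤ (S.card : ℝ) * (2 / (n:ℝ)) := by
    calc ε ≤ (1/2) * ∑ i, |μ i - μ' i| := hfar
      _ = ∑ i ∈ S, (μ i - μ' i) := key
      _ ≤ ∑ i ∈ S, (2 / (n:ℝ)) := by
          apply Finset.sum_le_sum
          intro i _
          have := hμ'0 i
          have := hbound i
          linarith
      _ = (S.card : ℝ) * (2 / (n:ℝ)) := by rw [Finset.sum_const, nsmul_eq_mul]
  have h3 : ε * n ≤ (S.card : ℝ) * 2 := by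
    have h4 := mul_le_mul_of_nonneg_right h2 hn'.le
    rwa [mul_assoc, div_mul_cancel₀ (2:ℝ) hn'.ne'] at h4
  linarith
end

section
/- Let 0 < ε ≤ 1 and 0 < δ ≤ 1/2, let μ, μ' be distributions over [n] such that |μ(i) − 1/n| < ε/(100n) for every i ∈ [n] and d(μ,μ') ≥ ε, and let k = ⌈(6/ε)·log(1/δ)⌉ (natural logarithm). If i_1, …, i_k are independent uniformly random elements of [n], then with probability at least 1 − δ/3 there exists some 1 ≤ t ≤ k with μ'(i_t) < μ(i_t). -/
/-!
Let `S = {i | μ' i < μ i}`. Since `μ` and `μ'` have equal mass,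
`d(μ, μ') = ∑_{i ∈ S} (μ i - μ' i)`, and each term is at most `μ i ≤ (1 + ε/100)/n`; hence `|S|/n ≥ 100ε/101`. A sample misses `S`
with probability `(1 - |S|/n)^k ≤ exp(-100εk/101) ≤ δ^3 ≤ δ/3`.
-/

open Finset MeasureTheory

lemma sum_abs_sub_eq_two_mul_sum_filter_lt {ι : Type*} (s : Finset ι) (f g : ι → ℝ)
    (h : ∑ i ∈ s, f i = ∑ i ∈ s, g i) :
    ∑ i ∈ s, |f i - g i| = 2 * ∑ i ∈ s with g i < f i, (f i - g i) := by
  have hpointwise :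
      ∀ i, |f i - g i| = 2 * (if g i < f i then f i - g i else 0) - (f i - g i) := by
    intro i
    split_ifs with hlt
    · rw [abs_of_pos (sub_pos.2 hlt)]; ring
    · rw [abs_of_nonpos (sub_nonpos.2 (not_lt.1 hlt))]; ring
  rw [sum_congr rfl fun i _ => hpointwise i, sum_sub_distrib, sum_sub_distrib, h, sub_self,
    sub_zero, ← mul_sum, sum_filter]

lemma half_sum_abs_sub_le_card_mul {ι : Type*} [Fintype ι] {μ μ' : ι → ℝ} {M : ℝ}
    (hμ' : ∀ i, 0 ≤ μ' i) (hsum : ∑ i, μ i = ∑ i, μ' i) (hM : ∀ i, μ i ≤ M) :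
    (1 / 2) * ∑ i, |μ i - μ' i| ≤ #{i | μ' i < μ i} * M := by
  rw [sum_abs_sub_eq_two_mul_sum_filter_lt _ _ _ hsum, ← nsmul_eq_mul]
  calc (1 / 2) * (2 * ∑ i with μ' i < μ i, (μ i - μ' i))
      = ∑ i with μ' i < μ i, (μ i - μ' i) := by ring
    _ ≤ _ := sum_le_card_nsmul _ _ _ fun i _ => by linarith [hμ' i, hM i]

lemma one_sub_pow_le_pow_of_mul_log_le {p δ : ℝ} {k m : ℕ} (hp : p ≤ 1) (hδ : 0 < δ)
    (hk : m * Real.log (1 / δ) ≤ p * k) : (1 - p) ^ k ≤ δ ^ m :=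
  calc (1 - p) ^ k ≤ Real.exp (-p) ^ k :=
        pow_le_pow_left₀ (by linarith) (by linarith [Real.add_one_le_exp (-p)]) k
    _ = Real.exp (-(p * k)) := by rw [← Real.exp_nat_mul]; ring_nf
    _ ≤ Real.exp (m * Real.log δ) := by
        rw [Real.exp_le_exp]; rw [one_div, Real.log_inv] at hk; linarith
    _ = δ ^ m := by rw [Real.exp_nat_mul, Real.exp_log hδ]

lemma three_mul_log_le_mul {ε δ p : ℝ} {k : ℕ} (hε : 0 < ε) (hε1 : ε ≤ 1) (hδ : 0 < δ)
    (hδ1 : δ ≤ 1) (hp : ε ≤ p * (1 + ε / 100)) (hk : (6 / ε) * Real.log (1 / δ) ≤ k) :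
    3 * Real.log (1 / δ) ≤ p * k := by
  have hlog : 0 ≤ Real.log (1 / δ) := Real.log_nonneg (by rw [le_div_iff₀ hδ]; linarith)
  have hp' : 100 * ε / 101 ≤ p := by nlinarith
  calc 3 * Real.log (1 / δ) ≤ 100 * ε / 101 * ((6 / ε) * Real.log (1 / δ)) := by
        rw [show 100 * ε / 101 * ((6 / ε) * Real.log (1 / δ)) = 600 / 101 * Real.log (1 / δ) by
          field_simp; ring]
        linarith
    _ ≤ p * k := mul_le_mul hp' hk (by positivity) (by linarith)

lemma measure_finset_eq_ofReal_card_div {n : ℕ} {ν : Measure (Fin n)}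
    (hν : ∀ i, ν {i} = ENNReal.ofReal (1 / n)) (s : Finset (Fin n)) :
    ν s = ENNReal.ofReal (#s / n) := by
  rw [← sum_measure_singleton, sum_congr rfl fun i _ => hν i, sum_const, nsmul_eq_mul,
    ← ENNReal.ofReal_natCast, ← ENNReal.ofReal_mul (Nat.cast_nonneg _), mul_one_div]

lemma isProbabilityMeasure_of_singleton_eq {n : ℕ} (hn : 0 < n) {ν : Measure (Fin n)}
    (hν : ∀ i, ν {i} = ENNReal.ofReal (1 / n)) : IsProbabilityMeasure ν where
  measure_univ := by
    rw [← coe_univ, measure_finset_eq_ofReal_card_div hν, card_univ, Fintype.card_fin,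
      div_self (Nat.cast_pos.2 hn).ne', ENNReal.ofReal_one]

lemma pi_setOf_exists_mem_eq {α ι : Type*} [MeasurableSpace α] [Fintype ι] (ν : Measure α)
    [IsProbabilityMeasure ν] {A : Set α} (hA : MeasurableSet A) :
    Measure.pi (fun _ : ι => ν) {f | ∃ t, f t ∈ A} = 1 - ν Aᶜ ^ Fintype.card ι := by
  have hset : {f : ι → α | ∃ t, f t ∈ A} = (Set.univ.pi fun _ => Aᶜ)ᶜ := by
    ext f; simp [Set.mem_pi]
  rw [hset, prob_compl_eq_one_sub (MeasurableSet.univ_pi fun _ => hA.compl), Measure.pi_pi,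
    prod_const, card_univ]

theorem stmt_5_general (n : ℕ) (hn : 0 < n) (ε δ : ℝ) (hε : 0 < ε) (hε1 : ε ≤ 1)
    (hδ : 0 < δ) (hδ1 : δ ≤ 1 / 2)
    (μ μ' : Fin n → ℝ)
    (hμ1 : ∑ i, μ i = 1)
    (hμ'0 : ∀ i, 0 ≤ μ' i) (hμ'1 : ∑ i, μ' i = 1)
    (hclose : ∀ i, |μ i - 1 / n| < ε / (100 * n))
    (hfar : ε ≤ (1 / 2) * ∑ i, |μ i - μ' i|)
    (k : ℕ) (hk : k = ⌈(6 / ε) * Real.log (1 / δ)⌉₊)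
    (ν : Measure (Fin n))
    (hν : ∀ i : Fin n, ν {i} = ENNReal.ofReal (1 / n)) :
    ENNReal.ofReal (1 - δ / 3) ≤
      Measure.pi (fun _ : Fin k => ν)
        {f | ∃ t : Fin k, μ' (f t) < μ (f t)} := by
  set S : Finset (Fin n) := {i | μ' i < μ i}
  have hn' : (0 : ℝ) < n := Nat.cast_pos.2 hn
  have hSn : (#S : ℝ) ≤ n := by exact_mod_cast (card_le_univ S).trans_eq (Fintype.card_fin n)
  have hp_le : (0 : ℝ) ≤ 1 - #S / n := sub_nonneg.2 (div_le_one_of_le₀ hSn hn'.le)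
  have hdense : ε ≤ #S / n * (1 + ε / 100) := by
    have hμ_le : ∀ i, μ i ≤ 1 / n + ε / (100 * n) := fun i => by
      linarith [(abs_lt.1 (hclose i)).2]
    calc ε ≤ #S * (1 / n + ε / (100 * n)) :=
          hfar.trans (half_sum_abs_sub_le_card_mul hμ'0 (hμ1.trans hμ'1.symm) hμ_le)
      _ = #S / n * (1 + ε / 100) := by field_simp
  have hmiss : (1 - #S / n) ^ k ≤ δ / 3 := by
    refine (one_sub_pow_le_pow_of_mul_log_le (m := 3) (by linarith) hδ ?_).trans
      (by nlinarith [pow_pos hδ 2])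
    exact_mod_cast three_mul_log_le_mul hε hε1 hδ (by linarith) hdense (hk ▸ Nat.le_ceil _)
  have := isProbabilityMeasure_of_singleton_eq hn hν
  have hcompl : ν (↑S)ᶜ = ENNReal.ofReal (1 - #S / n) := by
    rw [← coe_compl, measure_finset_eq_ofReal_card_div hν, card_compl, Fintype.card_fin,
      Nat.cast_sub (by exact_mod_cast hSn), sub_div, div_self hn'.ne']
  have hset : {f : Fin k → Fin n | ∃ t, μ' (f t) < μ (f t)} =
      {f | ∃ t, f t ∈ (S : Set (Fin n))} := by
    ext f; simp [S]
  rw [hset, pi_setOf_exists_mem_eq ν S.finite_toSet.measurableSet, hcompl,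
    Fintype.card_fin, ← ENNReal.ofReal_pow hp_le, ← ENNReal.ofReal_one,
    ← ENNReal.ofReal_sub _ (pow_nonneg hp_le k)]
  exact ENNReal.ofReal_le_ofReal (by linarith)

/-- If `μ` is pointwise within `ε/(100n)` of uniform, `d(μ,μ') ≥ ε`,
and `k = ⌈(6/ε)·log(1/δ)⌉`, then `k` independent uniform samples from `[n]` contain,
with probability at least `1 − δ/3`, an element `i` with `μ'(i) < μ(i)`. -/
theorem stmt_5 (n : ℕ) (hn : 0 < n) (ε δ : ℝ) (hε : 0 < ε) (hε1 : ε ≤ 1)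
    (hδ : 0 < δ) (hδ1 : δ ≤ 1 / 2)
    (μ μ' : Fin n → ℝ)
    (hμ0 : ∀ i, 0 ≤ μ i) (hμ1 : ∑ i, μ i = 1)
    (hμ'0 : ∀ i, 0 ≤ μ' i) (hμ'1 : ∑ i, μ' i = 1)
    (hclose : ∀ i, |μ i - 1 / n| < ε / (100 * n))
    (hfar : ε ≤ (1 / 2) * ∑ i, |μ i - μ' i|)
    (k : ℕ) (hk : k = ⌈(6 / ε) * Real.log (1 / δ)⌉₊)
    (ν : Measure (Fin n))
    (hν : ∀ i : Fin n, ν {i} = ENNReal.ofReal (1 / n)) :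
    ENNReal.ofReal (1 - δ / 3) ≤
      Measure.pi (fun _ : Fin k => ν)
        {f | ∃ t : Fin k, μ' (f t) < μ (f t)} :=
  stmt_5_general n hn ε δ hε hε1 hδ hδ1 μ μ' hμ1 hμ'0 hμ'1 hclose hfar k hk ν hν
end

section
/- Let 0 < ε ≤ 1/10, let k ≥ 1 be an integer, and let μ, μ' be distributions over [n] such that |μ(i) − 1/n| < ε/(100n) for every i ∈ [n]. Let A ⊆ [n] with |A| = 2k, and suppose there exist i, j ∈ A with μ'(i) ≥ μ(i) + ε/(2n) and μ'(j) < μ(j). Then μ(A) > 0, μ'(A) > 0, and the variation distance between the restrictions satisfies d(μ|_A, μ'|_A) ≥ ε/(100k). -/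
open Finset

set_option maxHeartbeats 1000000 in
/-- If `μ` is pointwise within `ε/(100n)` of uniform, `A ⊆ [n]` has
size `2k`, and `A` contains both an element `i` with `μ'(i) ≥ μ(i) + ε/(2n)` and an
element `j` with `μ'(j) < μ(j)`, then `μ(A) > 0`, `μ'(A) > 0`, and
`d(μ|_A, μ'|_A) ≥ ε/(100k)`. -/
theorem stmt_6 (n k : ℕ) (hn : 0 < n) (hk : 1 ≤ k)
    (ε : ℝ) (hε : 0 < ε) (hε1 : ε ≤ 1 / 10)
    (μ μ' : Fin n → ℝ)
    (hμ0 : ∀ i, 0 ≤ μ i) (hμ1 : ∑ i, μ i = 1)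
    (hμ'0 : ∀ i, 0 ≤ μ' i) (hμ'1 : ∑ i, μ' i = 1)
    (hclose : ∀ i, |μ i - 1 / n| < ε / (100 * n))
    (A : Finset (Fin n)) (hA : A.card = 2 * k)
    (i j : Fin n) (hiA : i ∈ A) (hjA : j ∈ A)
    (hi : μ i + ε / (2 * n) ≤ μ' i) (hj : μ' j < μ j) :
    0 < ∑ a ∈ A, μ a ∧ 0 < ∑ a ∈ A, μ' a ∧
      ε / (100 * k) ≤
        (1 / 2) * ∑ a ∈ A, |μ a / (∑ b ∈ A, μ b) - μ' a / (∑ b ∈ A, μ' b)| := by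
  have hn' : (0:ℝ) < n := by exact_mod_cast hn
  have hk' : (1:ℝ) ≤ k := by exact_mod_cast hk
  have hk0 : (0:ℝ) < k := by linarith
  set s := ∑ a ∈ A, μ a with hs_def
  set s' := ∑ a ∈ A, μ' a with hs'_def
  -- pointwise multiplied bounds
  have hnμ : ∀ a, |(n:ℝ) * μ a - 1| < ε / 100 := by
    intro a
    have h := hclose a
    have h1 : (n:ℝ) * μ a - 1 = n * (μ a - 1/n) := by field_simp
    have h2 : (n:ℝ) * (ε/(100*n)) = ε/100 := by field_simp
    rw [h1, abs_mul, abs_of_pos hn']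
    calc (n:ℝ) * |μ a - 1/n| < n * (ε/(100*n)) := by
          exact mul_lt_mul_of_pos_left h hn'
      _ = ε/100 := h2
  -- bounds on s
  have hub : ∀ a ∈ A, μ a ≤ (1 + ε/100)/n := by
    intro a _
    have h := (abs_lt.mp (hnμ a)).2
    rw [le_div_iff₀ hn']
    nlinarith
  have hlb : ∀ a ∈ A, (1 - ε/100)/n ≤ μ a := by
    intro a _
    have h := (abs_lt.mp (hnμ a)).1
    rw [div_le_iff₀ hn']
    nlinarith
  have hs_ub : s ≤ 2*k * ((1 + ε/100)/n) := by
    have := Finset.sum_le_card_nsmul A μ _ hub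
    rw [hA] at this
    push_cast [nsmul_eq_mul] at this
    linarith
  have hs_lb : 2*k * ((1 - ε/100)/n) ≤ s := by
    have := Finset.card_nsmul_le_sum A μ _ hlb
    rw [hA] at this
    push_cast [nsmul_eq_mul] at this
    linarith
  have h999 : (0:ℝ) < 1 - ε/100 := by linarith
  have hs0 : 0 < s := by
    have h1 : (0:ℝ) < 2*k * ((1 - ε/100)/n) := by
      apply mul_pos (by linarith) (div_pos h999 hn')
    linarith
  have hμi0 : 0 < μ i := by
    have := hlb i hiA
    have : (0:ℝ) < (1 - ε/100)/n := div_pos h999 hn'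
    linarith [hlb i hiA]
  have hs'0 : 0 < s' := by
    have h1 : μ' i ≤ s' := Finset.single_le_sum (fun a _ => hμ'0 a) hiA
    have h2 : (0:ℝ) < ε / (2*n) := by positivity
    linarith
  refine ⟨hs0, hs'0, ?_⟩
  clear_value s s'
  -- multiplied versions of key facts
  have hns_ub : (n:ℝ) * s ≤ 2*k*(1 + ε/100) := by
    have h1 : (n:ℝ) * (2*k * ((1 + ε/100)/n)) = 2*k*(1+ε/100) := by field_simp
    linarith [mul_le_mul_of_nonneg_left hs_ub hn'.le, h1]
  have hns_lb : 2*k*(1 - ε/100) ≤ (n:ℝ) * s := by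
    have h1 : (n:ℝ) * (2*k * ((1 - ε/100)/n)) = 2*k*(1-ε/100) := by field_simp
    linarith [mul_le_mul_of_nonneg_left hs_lb hn'.le, h1]
  have hi' : (n:ℝ) * μ i + ε/2 ≤ n * μ' i := by
    have e : (n:ℝ) * (μ i + ε/(2*n)) = n * μ i + ε/2 := by field_simp
    linarith [mul_le_mul_of_nonneg_left hi hn'.le, e]
  have hj' : (n:ℝ) * μ' j ≤ n * μ j :=
    mul_le_mul_of_nonneg_left hj.le hn'.le
  -- i ≠ j
  have hij : i ≠ j := by
    rintro rfl
    have : (0:ℝ) < ε / (2*n) := by positivity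
    linarith
  -- the two terms in the sum
  set f : Fin n → ℝ := fun a => |μ a / s - μ' a / s'| with hf_def
  have hsum2 : f i + f j ≤ ∑ a ∈ A, f a := by
    have hsub : ({i, j} : Finset (Fin n)) ⊆ A := by
      intro x hx
      simp only [Finset.mem_insert, Finset.mem_singleton] at hx
      rcases hx with rfl | rfl <;> assumption
    have := Finset.sum_le_sum_of_subset_of_nonneg hsub
      (fun a _ _ => abs_nonneg (μ a / s - μ' a / s'))
    rwa [Finset.sum_pair hij] at this
  have hfi : μ' i / s' - μ i / s ≤ f i := by
    have := neg_abs_le (μ i / s - μ' i / s')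
    simp only [hf_def]
    linarith
  have hfj : μ j / s - μ' j / s' ≤ f j := le_abs_self _
  have hfi0 : 0 ≤ f i := abs_nonneg _
  -- main claim
  have hmain : ε / (50*k) ≤ f i + f j := by
    rcases le_or_gt s' (2*s) with hcase | hcase
    · -- s' ≤ 2s : use both i and j terms
      have hd : |(n:ℝ) * μ i - n * μ j| ≤ ε/50 := by
        have h1 := abs_lt.mp (hnμ i)
        have h2 := abs_lt.mp (hnμ j)
        rw [abs_le]
        constructor <;> linarith [h1.1, h1.2, h2.1, h2.2]
      have ht : |s - s'| ≤ s := by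
        rw [abs_le]
        constructor <;> linarith
      have hprod : -(ε/50 * s) ≤ ((n:ℝ) * μ i - n * μ j) * (s - s') := by
        have h1 : |((n:ℝ) * μ i - n * μ j) * (s - s')| ≤ ε/50 * s := by
          rw [abs_mul]
          exact mul_le_mul hd ht (abs_nonneg _) (by positivity)
        linarith [neg_abs_le (((n:ℝ) * μ i - n * μ j) * (s - s'))]
      have hX : (μ' i / s' - μ i / s) + (μ j / s - μ' j / s')
          = (μ' i * s - μ i * s' + μ j * s' - μ' j * s) / (s * s') := by
        field_simp
        ring
      have hgoal : ε / (50*k) ≤ (μ' i * s - μ i * s' + μ j * s' - μ' j * s) / (s * s') := by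
        rw [div_le_div_iff₀ (by positivity) (by positivity)]
        -- multiply by n and use polynomial facts
        have hns' : (n:ℝ) * s' ≤ 24*k := by
          have h1 : (n:ℝ) * s' ≤ 2 * ((n:ℝ) * s) := by
            linarith [mul_le_mul_of_nonneg_left hcase hn'.le]
          have h2 : (k:ℝ) * ε ≤ k * (1/10) := mul_le_mul_of_nonneg_left hε1 hk0.le
          linarith
        have hnN : 12/25 * ε * s ≤
            (n:ℝ) * (μ' i * s - μ i * s' + μ j * s' - μ' j * s) := by
          linarith [mul_nonneg (by linarith : (0:ℝ) ≤ n * μ' i - n * μ i - ε/2) hs0.le,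
            mul_nonneg (by linarith : (0:ℝ) ≤ n * μ j - n * μ' j) hs0.le, hprod]
        have hmul : (n:ℝ) * (ε * (s * s')) ≤
            (n:ℝ) * (μ' i * s - μ i * s' + μ j * s' - μ' j * s) * (50*k) := by
          have h1 : (n:ℝ) * (ε * (s * s')) = (ε * s) * ((n:ℝ) * s') := by ring
          have h2 : (ε * s) * ((n:ℝ) * s') ≤ (ε * s) * (24*k) := by
            apply mul_le_mul_of_nonneg_left hns' (by positivity)
          linarith [mul_le_mul_of_nonneg_right hnN (by positivity : (0:ℝ) ≤ 50*k)]
        have hmul' : (n:ℝ) * (ε * (s*s')) ≤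
            (n:ℝ) * ((μ' i * s - μ i * s' + μ j * s' - μ' j * s) * (50*k)) := by
          linarith [hmul]
        exact le_of_mul_le_mul_left hmul' hn'
      calc ε / (50*k) ≤ (μ' i / s' - μ i / s) + (μ j / s - μ' j / s') := by
            rw [hX]; exact hgoal
        _ ≤ f i + f j := by linarith
    · -- 2s < s' : use the j term alone
      have hnμj : 1 - ε/100 ≤ (n:ℝ) * μ j := by linarith [(abs_lt.mp (hnμ j)).1]
      have h4 : ε / (50*k) ≤ μ j / (2*s) := by
        rw [div_le_div_iff₀ (by positivity) (by positivity)]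
        have h5 : (n:ℝ) * (ε * (2*s)) ≤ (n:ℝ) * (μ j * (50*k)) := by
          nlinarith [mul_le_mul_of_nonneg_left hns_ub (by positivity : (0:ℝ) ≤ 2*ε),
            mul_le_mul_of_nonneg_left hnμj (by positivity : (0:ℝ) ≤ 50*k),
            mul_le_mul_of_nonneg_left hε1 (mul_pos hk0 hε).le, hk0, hε]
        exact le_of_mul_le_mul_left h5 hn'
      have h7 : μ j / s - μ j / (2*s) = μ j / (2*s) := by
        field_simp
        ring
      have h1 : μ' j / s' ≤ μ j / s' := by
        gcongr
      have h2 : μ j / s' ≤ μ j / (2*s) :=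
        div_le_div_of_nonneg_left (hμ0 j) (by positivity) hcase.le
      linarith [hfi0, hfj]
  have heq : ε / (100*k) = 1/2 * (ε / (50*k)) := by ring
  have : ∑ a ∈ A, f a = ∑ a ∈ A, |μ a / s - μ' a / s'| := rfl
  linarith [hsum2, hmain]
end

section
/- Let μ, μ' be distributions over [n] and let M = {M_0, M_1, …, M_k} be a partition of [n] with μ(M_i) > 0 and μ'(M_i) > 0 for all 0 ≤ i ≤ k. If ‖μ − μ'‖₁ ≥ ε, then for every real t ≥ 1 at least one of the following holds: (1) ∑_{i : ‖μ|_{M_i} − μ'|_{M_i}‖₁ ≥ ε/(2t)} μ(M_i) ≥ ε/(4t); or (2) ‖⟨μ⟩_M − ⟨μ'⟩_M‖₁ ≥ ε·(1 − 1/t). -/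
open Finset

/-- For distributions `μ, μ'` over `[n]`, a partition `M_0, …, M_k`
with positive weight under both, and `‖μ − μ'‖₁ ≥ ε`: for every real `t ≥ 1`, either
the total `μ`-weight of parts whose restriction distance is at least `ε/(2t)` is at
least `ε/(4t)`, or the coarsening distance is at least `ε·(1 − 1/t)`. -/
theorem stmt_7 (n k : ℕ) (ε : ℝ) (μ μ' : Fin n → ℝ)
    (hμ0 : ∀ i, 0 ≤ μ i) (hμ1 : ∑ i, μ i = 1)
    (hμ'0 : ∀ i, 0 ≤ μ' i) (hμ'1 : ∑ i, μ' i = 1)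
    (M : Fin (k + 1) → Finset (Fin n))
    (hdisj : ∀ i j, i ≠ j → Disjoint (M i) (M j))
    (hcover : ∀ x : Fin n, ∃ i, x ∈ M i)
    (hpos : ∀ i, 0 < ∑ j ∈ M i, μ j)
    (hpos' : ∀ i, 0 < ∑ j ∈ M i, μ' j)
    (hfar : ε ≤ ∑ j, |μ j - μ' j|)
    (t : ℝ) (ht : 1 ≤ t) :
    (ε / (4 * t) ≤
        ∑ i ∈ univ.filter (fun i : Fin (k + 1) =>
          ε / (2 * t) ≤
            ∑ j ∈ M i, |μ j / (∑ j' ∈ M i, μ j') - μ' j / (∑ j' ∈ M i, μ' j')|),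
          ∑ j ∈ M i, μ j)
    ∨ (ε * (1 - 1 / t) ≤ ∑ i, |(∑ j ∈ M i, μ j) - (∑ j ∈ M i, μ' j)|) := by
  rcases le_or_gt (ε * (1 - 1 / t)) (∑ i, |(∑ j ∈ M i, μ j) - (∑ j ∈ M i, μ' j)|) with h2 | h2
  · exact Or.inr h2
  left
  have ht0 : (0:ℝ) < t := lt_of_lt_of_le one_pos ht
  have huniv : Finset.univ.biUnion M = Finset.univ := by
    ext x
    simp only [mem_biUnion, mem_univ, iff_true]
    obtain ⟨i, hi⟩ := hcover x
    exact ⟨i, trivial, hi⟩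
  have hpart : ∀ f : Fin n → ℝ, ∑ j, f j = ∑ i, ∑ j ∈ M i, f j := by
    intro f
    rw [← huniv, Finset.sum_biUnion (fun i _ j _ hij => hdisj i j hij)]
  set A : Fin (k+1) → ℝ := fun i => ∑ j ∈ M i, μ j with hAdef
  set B : Fin (k+1) → ℝ := fun i => ∑ j ∈ M i, μ' j with hBdef
  set R : Fin (k+1) → ℝ := fun i =>
    ∑ j ∈ M i, |μ j / (∑ j' ∈ M i, μ j') - μ' j / (∑ j' ∈ M i, μ' j')| with hRdef
  have hA0 : ∀ i, 0 < A i := hpos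
  have hB0 : ∀ i, 0 < B i := hpos'
  have hA1 : ∑ i, A i = 1 := by rw [hAdef, ← hpart, hμ1]
  have key : ∀ i, (∑ j ∈ M i, |μ j - μ' j|) ≤ A i * R i + |A i - B i| := by
    intro i
    have ha := hA0 i
    have hb := hB0 i
    have h1 : ∀ j ∈ M i, |μ j - μ' j| ≤
        A i * |μ j / A i - μ' j / B i| + (μ' j / B i) * |A i - B i| := by
      intro j hj
      have hq : 0 ≤ μ' j / B i := div_nonneg (hμ'0 j) hb.le
      have heq : μ j - μ' j = A i * (μ j / A i - μ' j / B i) + (μ' j / B i) * (A i - B i) := by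
        field_simp
        ring
      rw [heq]
      calc |A i * (μ j / A i - μ' j / B i) + (μ' j / B i) * (A i - B i)|
          ≤ |A i * (μ j / A i - μ' j / B i)| + |(μ' j / B i) * (A i - B i)| := abs_add_le _ _
        _ = A i * |μ j / A i - μ' j / B i| + (μ' j / B i) * |A i - B i| := by
            rw [abs_mul, abs_mul, abs_of_pos ha, abs_of_nonneg hq]
    calc (∑ j ∈ M i, |μ j - μ' j|)
        ≤ ∑ j ∈ M i, (A i * |μ j / A i - μ' j / B i| + (μ' j / B i) * |A i - B i|) :=
          Finset.sum_le_sum h1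
      _ = A i * R i + |A i - B i| := by
          rw [Finset.sum_add_distrib, ← Finset.mul_sum, ← Finset.sum_mul]
          have hb1 : ∑ j ∈ M i, μ' j / B i = 1 := by
            rw [← Finset.sum_div]
            exact div_self hb.ne'
          rw [hb1, one_mul, hRdef]
  have hR2 : ∀ i, R i ≤ 2 := by
    intro i
    have ha := hA0 i
    have hb := hB0 i
    have ha1 : ∑ j ∈ M i, μ j / A i = 1 := by
      rw [← Finset.sum_div]; exact div_self ha.ne'
    have hb1 : ∑ j ∈ M i, μ' j / B i = 1 := by
      rw [← Finset.sum_div]; exact div_self hb.ne'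
    calc R i ≤ ∑ j ∈ M i, (μ j / A i + μ' j / B i) := by
          apply Finset.sum_le_sum
          intro j hj
          calc |μ j / A i - μ' j / B i| ≤ |μ j / A i| + |μ' j / B i| := abs_sub _ _
            _ = μ j / A i + μ' j / B i := by
                rw [abs_of_nonneg (div_nonneg (hμ0 j) ha.le),
                  abs_of_nonneg (div_nonneg (hμ'0 j) hb.le)]
      _ = 2 := by rw [Finset.sum_add_distrib, ha1, hb1]; norm_num
  have hR0 : ∀ i, 0 ≤ R i := fun i => Finset.sum_nonneg fun j _ => abs_nonneg _
  -- global chain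
  have hchain : ε ≤ ∑ i, (A i * R i) + ∑ i, |A i - B i| := by
    calc ε ≤ ∑ j, |μ j - μ' j| := hfar
      _ = ∑ i, ∑ j ∈ M i, |μ j - μ' j| := hpart _
      _ ≤ ∑ i, (A i * R i + |A i - B i|) := Finset.sum_le_sum fun i _ => key i
      _ = ∑ i, (A i * R i) + ∑ i, |A i - B i| := Finset.sum_add_distrib
  have hABnn : (0:ℝ) ≤ ∑ i, |A i - B i| := Finset.sum_nonneg fun i _ => abs_nonneg _
  have hε0 : 0 < ε * (1 - 1 / t) := lt_of_le_of_lt hABnn h2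
  have h1t : 0 ≤ 1 - 1 / t := by
    rw [sub_nonneg]
    exact div_le_one_of_le₀ ht ht0.le
  have hεpos : 0 < ε := by
    by_contra h
    push_neg at h
    nlinarith
  -- split the AR sum
  set F : Finset (Fin (k+1)) := Finset.univ.filter (fun i => ε / (2 * t) ≤ R i) with hFdef
  have hsplit : ∑ i ∈ F, (A i * R i) + ∑ i ∈ Finset.univ.filter (fun i => ¬ (ε / (2 * t) ≤ R i)), (A i * R i) = ∑ i, (A i * R i) := by
    exact Finset.sum_filter_add_sum_filter_not _ _ _
  have hF2 : ∑ i ∈ F, (A i * R i) ≤ 2 * ∑ i ∈ F, A i := by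
    rw [Finset.mul_sum]
    apply Finset.sum_le_sum
    intro i _
    calc A i * R i ≤ A i * 2 := mul_le_mul_of_nonneg_left (hR2 i) (hA0 i).le
      _ = 2 * A i := mul_comm _ _
  have hFc : ∑ i ∈ Finset.univ.filter (fun i => ¬ (ε / (2 * t) ≤ R i)), (A i * R i)
      ≤ ε / (2 * t) * ∑ i ∈ Finset.univ.filter (fun i => ¬ (ε / (2 * t) ≤ R i)), A i := by
    rw [Finset.mul_sum]
    apply Finset.sum_le_sum
    intro i hi
    rw [Finset.mem_filter] at hi
    have : R i ≤ ε / (2 * t) := (lt_of_not_ge hi.2).le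
    calc A i * R i ≤ A i * (ε / (2 * t)) := mul_le_mul_of_nonneg_left this (hA0 i).le
      _ = ε / (2 * t) * A i := mul_comm _ _
  have hAcle : ∑ i ∈ Finset.univ.filter (fun i => ¬ (ε / (2 * t) ≤ R i)), A i ≤ 1 := by
    rw [← hA1]
    exact Finset.sum_le_sum_of_subset_of_nonneg (Finset.filter_subset _ _)
      (fun i _ _ => (hA0 i).le)
  have hAcnn : 0 ≤ ∑ i ∈ Finset.univ.filter (fun i => ¬ (ε / (2 * t) ≤ R i)), A i :=
    Finset.sum_nonneg fun i _ => (hA0 i).le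
  have hεt : 0 ≤ ε / (2 * t) := by positivity
  -- conclude
  have hgoal : ε / (4 * t) ≤ ∑ i ∈ F, A i := by
    rw [div_le_iff₀ (by positivity : (0:ℝ) < 4 * t)]
    have h2t : ε / (2 * t) * (2 * t) = ε := div_mul_cancel₀ _ (by positivity : (2*t:ℝ) ≠ 0)
    have h1tε : ε * (1 - 1 / t) * t = ε * t - ε := by
      field_simp
    nlinarith [mul_le_mul_of_nonneg_right hFc ht0.le,
      mul_le_mul_of_nonneg_left hAcle hεt,
      mul_le_mul_of_nonneg_right hchain ht0.le,
      mul_le_mul_of_nonneg_right h2.le ht0.le,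
      mul_le_mul_of_nonneg_right hF2 ht0.le]
  exact hgoal
end

section
/- Let n = 2^m with m ≥ 1, let 0 < ε ≤ 1, let μ be a distribution over [n], and let α be an assignment of values in [0,1] to the internal nodes of the dyadic tree on [n] that is ε-fine with respect to μ. Then the reconstituted distribution μ̃ according to α is a distribution over [n] (∑_{i=1}^n μ̃(i) = 1) and μ̃ is 2ε-fine with respect to μ, i.e., there exists B ⊆ [n] with μ(B) ≤ 2ε such that (1−2ε)·μ(i) ≤ μ̃(i) ≤ (1+2ε)·μ(i) for every i ∈ [n]∖B. -/
/-!
Put `η = ε / (2m)` and call a leaf heavy if every step of its root-to-leaf path keeps at least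
an `η` share of the parent's `μ`-mass. On each level the children lighter than `η` times their
parent carry at most `2η` of the total mass, so the other leaves have mass at most `2mη = ε`.
Along a heavy path the ratio `q = μ(child)/μ(parent)` is at least `η`, so an `η²`-accurate
branch weight `p` satisfies `|p - q| ≤ η q`. The ratios telescope to `μ(i)`, hence
`μ̃(i)/μ(i)` lies between `(1 - η)^m ≥ 1 - ε/2` and `(1 + η)^m ≤ 1 + ε`. That `μ̃` sums to `1`
is an induction on the depth, as sibling weights `α` and `1 - α` add up to `1`.
-/

open Finset

lemma Nat.div_two_pow_sub_eq_div_div_two (j : ℕ) {m l : ℕ} (hl : l < m) :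
    j / 2 ^ (m - l) = j / 2 ^ (m - (l + 1)) / 2 := by
  rw [Nat.div_div_eq_div_mul, ← pow_succ]
  congr 2
  omega

lemma Nat.div_two_pow_sub_lt {j m : ℕ} (hj : j < 2 ^ m) {l : ℕ} (hl : l ≤ m) :
    j / 2 ^ (m - l) < 2 ^ l := by
  rw [Nat.div_lt_iff_lt_mul (by positivity), ← pow_add, Nat.add_sub_cancel' hl]
  exact hj

lemma Finset.sum_range_two_mul {M : Type*} [AddCommMonoid M] (N : ℕ) (f : ℕ → M) :
    ∑ v ∈ range (2 * N), f v = ∑ t ∈ range N, (f (2 * t) + f (2 * t + 1)) := by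
  induction N with
  | zero => simp
  | succ N ih =>
    rw [mul_add_one, sum_range_succ, sum_range_succ, sum_range_succ, ih, add_assoc]

lemma Finset.sum_biUnion_le_sum_sum {ι κ : Type*} [DecidableEq κ] (s : Finset ι)
    (t : ι → Finset κ) {f : κ → ℝ} (hf : 0 ≤ f) :
    ∑ x ∈ s.biUnion t, f x ≤ ∑ i ∈ s, ∑ x ∈ t i, f x := by
  classical
  induction s using Finset.induction_on with
  | empty => simp
  | insert a s ha ih =>
    rw [biUnion_insert, sum_insert ha]
    have hunion := sum_union_inter (s₁ := t a) (s₂ := s.biUnion t) (f := f)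
    have hinter : 0 ≤ ∑ x ∈ t a ∩ s.biUnion t, f x := sum_nonneg fun x _ => hf x
    linarith

lemma Finset.prod_mem_bounds_of_mem_bounds {ι : Type*} {s : Finset ι} {p q : ι → ℝ} {η : ℝ}
    (hη : η ≤ 1) (hq : ∀ k ∈ s, 0 ≤ q k)
    (hpq : ∀ k ∈ s, (1 - η) * q k ≤ p k ∧ p k ≤ (1 + η) * q k) :
    (1 - η) ^ #s * ∏ k ∈ s, q k ≤ ∏ k ∈ s, p k ∧
      ∏ k ∈ s, p k ≤ (1 + η) ^ #s * ∏ k ∈ s, q k := by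
  have hlow : ∀ k ∈ s, 0 ≤ (1 - η) * q k := fun k hk => mul_nonneg (by linarith) (hq k hk)
  rw [← prod_const, ← prod_const, ← prod_mul_distrib, ← prod_mul_distrib]
  exact ⟨prod_le_prod hlow fun k hk => (hpq k hk).1,
    prod_le_prod (fun k hk => (hlow k hk).trans (hpq k hk).1) fun k hk => (hpq k hk).2⟩

lemma mul_prod_range_div_eq {a : ℕ → ℝ} {m : ℕ} (ha : ∀ k < m, a k ≠ 0) :
    a 0 * ∏ k ∈ range m, a (k + 1) / a k = a m := by
  induction m with
  | zero => simp
  | succ m ih =>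
    rw [prod_range_succ, ← mul_assoc, ih fun k hk => ha k (by omega),
      mul_div_cancel₀ _ (ha m (by omega))]

lemma mem_bounds_of_abs_sub_le_sq {p q η : ℝ} (hη : 0 ≤ η) (hq : η ≤ q) (h : |p - q| ≤ η ^ 2) :
    (1 - η) * q ≤ p ∧ p ≤ (1 + η) * q := by
  have hηq : η ^ 2 ≤ η * q := by nlinarith
  constructor <;> linarith [abs_le.mp h]

lemma one_sub_mul_le_pow {η : ℝ} (hη : η ≤ 2) (m : ℕ) : 1 - m * η ≤ (1 - η) ^ m := by
  simpa [sub_eq_add_neg] using one_add_mul_le_pow (a := -η) (by linarith) m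

lemma one_add_pow_le {η : ℝ} (hη : 0 ≤ η) (hη1 : η ≤ 1) {m : ℕ} (hmη : m * η ≤ 1 / 2) :
    (1 + η) ^ m ≤ 1 + 2 * (m * η) := by
  have hbern := one_sub_mul_le_pow (by linarith : η ≤ 2) m
  have hprod : (1 + η) ^ m * (1 - η) ^ m ≤ 1 := by
    rw [← mul_pow]
    exact pow_le_one₀ (by nlinarith) (by nlinarith)
  have hx : 0 ≤ m * η := by positivity
  have hmul : (1 + η) ^ m * (1 - m * η) ≤ (1 + 2 * (m * η)) * (1 - m * η) := by
    nlinarith [mul_le_mul_of_nonneg_left hbern (by positivity : (0 : ℝ) ≤ (1 + η) ^ m)]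
  exact le_of_mul_le_mul_right hmul (by linarith)

lemma one_sub_two_mul_le_pow_and_pow_le_one_add_two_mul {η ε : ℝ} {m : ℕ} (hη : 0 ≤ η)
    (hη1 : η ≤ 1) (hε1 : ε ≤ 1) (hmη : m * η = ε / 2) :
    1 - 2 * ε ≤ (1 - η) ^ m ∧ (1 + η) ^ m ≤ 1 + 2 * ε := by
  have hε : 0 ≤ ε := by nlinarith [(Nat.cast_nonneg m : (0 : ℝ) ≤ m)]
  refine ⟨?_, (one_add_pow_le hη hη1 (by linarith)).trans (by linarith)⟩
  linarith [one_sub_mul_le_pow (by linarith : η ≤ 2) m]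

section NodeMass

variable {m : ℕ} (μ : Fin (2 ^ m) → ℝ)

/-- `μ(I_{l,t})`, with the leaves indexed from `0`. -/
def nodeMass (l t : ℕ) : ℝ :=
  ∑ i : Fin (2 ^ m) with i.val / 2 ^ (m - l) = t, μ i

lemma nodeMass_eq_sum_Ico (l t : ℕ) :
    nodeMass μ l t =
      ∑ i : Fin (2 ^ m) with t * 2 ^ (m - l) ≤ i.val ∧ i.val < (t + 1) * 2 ^ (m - l), μ i := by
  refine sum_congr (filter_congr fun i _ => ?_) fun _ _ => rfl
  have := Nat.two_pow_pos (m - l)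
  rw [Nat.div_eq_iff this, add_one_mul]
  omega

lemma nodeMass_zero_zero : nodeMass μ 0 0 = ∑ i, μ i := by
  rw [nodeMass, filter_true_of_mem fun i _ => Nat.div_eq_of_lt (by simp)]

lemma nodeMass_self (i : Fin (2 ^ m)) : nodeMass μ m i = μ i := by
  rw [nodeMass, Nat.sub_self, pow_zero]
  simp_rw [Nat.div_one, Fin.val_inj, filter_eq', mem_univ, if_true, sum_singleton]

lemma nodeMass_eq_add {l : ℕ} (hl : l < m) (t : ℕ) :
    nodeMass μ l t = nodeMass μ (l + 1) (2 * t) + nodeMass μ (l + 1) (2 * t + 1) := by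
  rw [nodeMass, nodeMass, nodeMass, ← sum_union (disjoint_filter.mpr fun i _ h => by omega)]
  refine sum_congr (ext fun i => ?_) fun _ _ => rfl
  simp only [mem_filter, mem_union, mem_univ, true_and, Nat.div_two_pow_sub_eq_div_div_two _ hl]
  omega

lemma sum_filter_eq_sum_nodeMass {l : ℕ} (hl : l ≤ m) (P : ℕ → Prop) [DecidablePred P] :
    ∑ i : Fin (2 ^ m) with P (i.val / 2 ^ (m - l)), μ i =
      ∑ v ∈ range (2 ^ l) with P v, nodeMass μ l v := by
  rw [sum_filter, sum_filter, ← sum_fiberwise_of_maps_to (t := range (2 ^ l))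
    fun i _ => mem_range.mpr (Nat.div_two_pow_sub_lt i.isLt hl)]
  refine sum_congr rfl fun v _ => ?_
  split_ifs with hv
  · exact sum_congr rfl fun i hi => by rw [(mem_filter.mp hi).2, if_pos hv]
  · exact sum_eq_zero fun i hi => by rw [(mem_filter.mp hi).2, if_neg hv]

lemma sum_nodeMass {l : ℕ} (hl : l ≤ m) : ∑ v ∈ range (2 ^ l), nodeMass μ l v = ∑ i, μ i := by
  simpa using (sum_filter_eq_sum_nodeMass μ hl fun _ => True).symm

noncomputable def lightLeaves (η : ℝ) (l : ℕ) : Finset (Fin (2 ^ m)) :=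
  {i | nodeMass μ (l + 1) (i.val / 2 ^ (m - (l + 1))) < η * nodeMass μ l (i.val / 2 ^ (m - l))}

variable {μ}

lemma nodeMass_nonneg (hμ : 0 ≤ μ) (l t : ℕ) : 0 ≤ nodeMass μ l t :=
  sum_nonneg fun i _ => hμ i

lemma sum_lightLeaves_le (hμ : 0 ≤ μ) {η : ℝ} (hη : 0 ≤ η) {l : ℕ} (hl : l < m) :
    ∑ i ∈ lightLeaves μ η l, μ i ≤ 2 * η * ∑ i, μ i := by
  simp_rw [lightLeaves, Nat.div_two_pow_sub_eq_div_div_two _ hl]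
  rw [sum_filter_eq_sum_nodeMass μ hl fun v => nodeMass μ (l + 1) v < η * nodeMass μ l (v / 2)]
  calc _ ≤ ∑ v ∈ range (2 ^ (l + 1)) with nodeMass μ (l + 1) v < η * nodeMass μ l (v / 2),
          η * nodeMass μ l (v / 2) := sum_le_sum fun v hv => (mem_filter.mp hv).2.le
    _ ≤ ∑ v ∈ range (2 ^ (l + 1)), η * nodeMass μ l (v / 2) :=
        sum_le_sum_of_subset_of_nonneg (filter_subset _ _)
          fun v _ _ => mul_nonneg hη (nodeMass_nonneg hμ _ _)
    _ = 2 * η * ∑ i, μ i := by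
        rw [pow_succ', sum_range_two_mul, ← sum_nodeMass μ hl.le, mul_sum]
        refine sum_congr rfl fun t _ => ?_
        rw [show 2 * t / 2 = t by omega, show (2 * t + 1) / 2 = t by omega]
        ring

lemma sum_biUnion_lightLeaves_le (hμ : 0 ≤ μ) {η : ℝ} (hη : 0 ≤ η) :
    ∑ i ∈ (range m).biUnion (lightLeaves μ η), μ i ≤ 2 * (m * η) * ∑ i, μ i :=
  calc _ ≤ ∑ l ∈ range m, ∑ i ∈ lightLeaves μ η l, μ i := sum_biUnion_le_sum_sum _ _ hμ
    _ ≤ ∑ l ∈ range m, 2 * η * ∑ i, μ i :=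
        sum_le_sum fun l hl => sum_lightLeaves_le hμ hη (mem_range.mp hl)
    _ = 2 * (m * η) * ∑ i, μ i := by rw [sum_const, card_range, nsmul_eq_mul]; ring

end NodeMass

section Reconstitution

variable (α : ℕ → ℕ → ℝ)

/-- The weight `α` or `1 - α` of the edge from node `(l, v / 2)` to its child `(l + 1, v)`. -/
def branchFactor (l v : ℕ) : ℝ :=
  if v % 2 = 0 then α l (v / 2) else 1 - α l (v / 2)

/-- `μ̃(v)` on a tree of depth `m`; the level-`(l + 1)` ancestor of leaf `v` is
`v / 2^(m-(l+1))`. -/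
def reconstituted (m v : ℕ) : ℝ :=
  ∏ l ∈ range m, branchFactor α l (v / 2 ^ (m - (l + 1)))

lemma branchFactor_two_mul_add_two_mul_add_one (l t : ℕ) :
    branchFactor α l (2 * t) + branchFactor α l (2 * t + 1) = 1 := by
  simp only [branchFactor, show 2 * t / 2 = t by omega, show (2 * t + 1) / 2 = t by omega,
    Nat.mul_mod_right, Nat.mul_add_mod_self_left]
  norm_num

lemma reconstituted_succ (m v : ℕ) :
    reconstituted α (m + 1) v = reconstituted α m (v / 2) * branchFactor α m v := by
  rw [reconstituted, prod_range_succ, Nat.sub_self, pow_zero, Nat.div_one, reconstituted]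
  congr 1
  refine prod_congr rfl fun l hl => ?_
  have hexp : m + 1 - (l + 1) = m - (l + 1) + 1 := by have := mem_range.mp hl; omega
  rw [Nat.div_div_eq_div_mul, ← pow_succ', hexp]

lemma sum_reconstituted (m : ℕ) : ∑ v ∈ range (2 ^ m), reconstituted α m v = 1 := by
  induction m with
  | zero => simp [reconstituted]
  | succ m ih =>
    rw [pow_succ', sum_range_two_mul, ← ih]
    refine sum_congr rfl fun t _ => ?_
    rw [reconstituted_succ, reconstituted_succ, show 2 * t / 2 = t by omega,
      show (2 * t + 1) / 2 = t by omega, ← mul_add,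
      branchFactor_two_mul_add_two_mul_add_one, mul_one]

variable {m : ℕ} {μ : Fin (2 ^ m) → ℝ}

lemma abs_branchFactor_sub_le {l : ℕ} (hl : l < m) {v : ℕ} {δ : ℝ}
    (hpos : 0 < nodeMass μ l (v / 2))
    (hfine : |α l (v / 2) - nodeMass μ (l + 1) (2 * (v / 2)) / nodeMass μ l (v / 2)| ≤ δ) :
    |branchFactor α l v - nodeMass μ (l + 1) v / nodeMass μ l (v / 2)| ≤ δ := by
  obtain ⟨t, rfl | rfl⟩ := Nat.even_or_odd' v
  · simpa [branchFactor] using hfine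
  · have hsplit := nodeMass_eq_add μ hl t
    have ht : (2 * t + 1) / 2 = t := by omega
    simp only [branchFactor, ht, Nat.mul_add_mod_self_left, Nat.one_mod, one_ne_zero,
      if_false] at hpos hfine ⊢
    rw [← abs_neg]
    convert hfine using 2
    field_simp
    linarith

theorem reconstituted_mem_bounds_of_heavy_path (hμ1 : ∑ i, μ i = 1) {η : ℝ} (hη : 0 < η)
    (hη1 : η ≤ 1)
    (hfine : ∀ l < m, ∀ t < 2 ^ l, 0 < nodeMass μ l t →
      |α l t - nodeMass μ (l + 1) (2 * t) / nodeMass μ l t| ≤ η ^ 2)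
    (i : Fin (2 ^ m))
    (hheavy : ∀ l < m, η * nodeMass μ l (i.val / 2 ^ (m - l)) ≤
      nodeMass μ (l + 1) (i.val / 2 ^ (m - (l + 1)))) :
    (1 - η) ^ m * μ i ≤ reconstituted α m i ∧ reconstituted α m i ≤ (1 + η) ^ m * μ i := by
  set a : ℕ → ℝ := fun l => nodeMass μ l (i.val / 2 ^ (m - l))
  have ha0 : a 0 = 1 := by
    rw [show a 0 = nodeMass μ 0 (i.val / 2 ^ m) from rfl, Nat.div_eq_of_lt i.isLt,
      nodeMass_zero_zero, hμ1]
  have ham : a m = μ i := by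
    rw [show a m = nodeMass μ m (i.val / 2 ^ (m - m)) from rfl, Nat.sub_self, pow_zero,
      Nat.div_one, nodeMass_self]
  have hpow_le : ∀ l ≤ m, η ^ l ≤ a l := by
    intro l hl
    induction l with
    | zero => rw [pow_zero, ha0]
    | succ l ih =>
      calc η ^ (l + 1) = η * η ^ l := pow_succ' η l
        _ ≤ η * a l := mul_le_mul_of_nonneg_left (ih (by omega)) hη.le
        _ ≤ a (l + 1) := hheavy l hl
  have hpos : ∀ l ≤ m, 0 < a l := fun l hl => (pow_pos hη l).trans_le (hpow_le l hl)
  have hstep : ∀ l ∈ range m, (1 - η) * (a (l + 1) / a l) ≤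
      branchFactor α l (i.val / 2 ^ (m - (l + 1))) ∧
      branchFactor α l (i.val / 2 ^ (m - (l + 1))) ≤ (1 + η) * (a (l + 1) / a l) := by
    intro l hl
    have hl : l < m := mem_range.mp hl
    have hparent := Nat.div_two_pow_sub_eq_div_div_two i.val hl
    refine mem_bounds_of_abs_sub_le_sq hη.le ?_ ?_
    · rw [le_div_iff₀ (hpos l hl.le)]
      exact hheavy l hl
    · have hparent_pos : 0 < nodeMass μ l (i.val / 2 ^ (m - l)) := hpos l hl.le
      have hparent_fine := hfine l hl _ (Nat.div_two_pow_sub_lt i.isLt hl.le) hparent_pos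
      rw [hparent] at hparent_pos hparent_fine
      simp only [a, hparent]
      exact abs_branchFactor_sub_le α hl hparent_pos hparent_fine
  have htelescope : ∏ l ∈ range m, a (l + 1) / a l = μ i := by
    rw [← ham, ← mul_prod_range_div_eq fun l hl => (hpos l hl.le).ne', ha0, one_mul]
  simpa only [reconstituted, card_range, htelescope] using
    prod_mem_bounds_of_mem_bounds hη1 (fun l hl => div_nonneg (hpos _ (mem_range.mp hl)).le
      (hpos l (mem_range.mp hl).le).le) hstep

end Reconstitution

/-- Leaf `i : Fin n` is the `(i+1)`-st element of `[n]`; the level-`l` node on its path is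
`(l, i / 2^(m-l))`, and `i` lies in its left child iff `i / 2^(m-l-1)` is even. -/
theorem stmt_10_general (m : ℕ) (hm : 1 ≤ m) (n : ℕ) (hn : n = 2 ^ m)
    (ε : ℝ) (hε : 0 < ε) (hε1 : ε ≤ 1)
    (μ : Fin n → ℝ) (hμ0 : ∀ i, 0 ≤ μ i) (hμ1 : ∑ i, μ i = 1)
    (α : ℕ → ℕ → ℝ)
    (μL μR : ℕ → ℕ → ℝ)
    (hμL : ∀ l t, μL l t = ∑ i ∈ univ.filter (fun i : Fin n =>
        2 * t * 2 ^ (m - (l + 1)) ≤ (i : ℕ) ∧ (i : ℕ) < (2 * t + 1) * 2 ^ (m - (l + 1))), μ i)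
    (hμR : ∀ l t, μR l t = ∑ i ∈ univ.filter (fun i : Fin n =>
        (2 * t + 1) * 2 ^ (m - (l + 1)) ≤ (i : ℕ) ∧ (i : ℕ) < (2 * t + 2) * 2 ^ (m - (l + 1))), μ i)
    (hfine : ∀ l t, l < m → t < 2 ^ l → 0 < μL l t + μR l t →
      |α l t - μL l t / (μL l t + μR l t)| ≤ (ε / (2 * m)) ^ 2)
    (μt : Fin n → ℝ)
    (hμt : ∀ i : Fin n, μt i = ∏ l ∈ range m,
      (if ((i : ℕ) / 2 ^ (m - (l + 1))) % 2 = 0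
        then α l ((i : ℕ) / 2 ^ (m - l))
        else 1 - α l ((i : ℕ) / 2 ^ (m - l)))) :
    (∑ i, μt i = 1) ∧
    ∃ B : Finset (Fin n), (∑ i ∈ B, μ i) ≤ 2 * ε ∧
      ∀ i ∉ B, (1 - 2 * ε) * μ i ≤ μt i ∧ μt i ≤ (1 + 2 * ε) * μ i := by
  subst hn
  set η := ε / (2 * m) with hη_def
  have hm' : (1 : ℝ) ≤ m := by exact_mod_cast hm
  have hmη : m * η = ε / 2 := by rw [hη_def]; field_simp
  have hη : 0 < η := by positivity
  have hη1 : η ≤ 1 := by rw [hη_def, div_le_one (by positivity)]; linarith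
  have hμt' : ∀ i, μt i = reconstituted α m i := fun i => by
    refine (hμt i).trans (prod_congr rfl fun l hl => ?_)
    rw [branchFactor, ← Nat.div_two_pow_sub_eq_div_div_two _ (mem_range.mp hl)]
  have hfine' : ∀ l < m, ∀ t < 2 ^ l, 0 < nodeMass μ l t →
      |α l t - nodeMass μ (l + 1) (2 * t) / nodeMass μ l t| ≤ η ^ 2 := by
    intro l hl t ht hpos
    have h := hfine l t hl ht
    rw [hμL, hμR, ← nodeMass_eq_sum_Ico, ← nodeMass_eq_sum_Ico, ← nodeMass_eq_add μ hl t] at h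
    exact h hpos
  obtain ⟨hlow, hhigh⟩ := one_sub_two_mul_le_pow_and_pow_le_one_add_two_mul hη.le hη1 hε1 hmη
  refine ⟨?_, (range m).biUnion (lightLeaves μ η), ?_, fun i hi => ?_⟩
  · simp_rw [hμt']
    exact (Fin.sum_univ_eq_sum_range (reconstituted α m) _).trans (sum_reconstituted α m)
  · linarith [hμ1 ▸ sum_biUnion_lightLeaves_le hμ0 hη.le]
  · have hheavy : ∀ l < m, η * nodeMass μ l (i.val / 2 ^ (m - l)) ≤
        nodeMass μ (l + 1) (i.val / 2 ^ (m - (l + 1))) := fun l hl => not_lt.mp fun hlight =>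
      hi (mem_biUnion.mpr ⟨l, mem_range.mpr hl, mem_filter.mpr ⟨mem_univ i, hlight⟩⟩)
    obtain ⟨hμt_low, hμt_high⟩ :=
      reconstituted_mem_bounds_of_heavy_path α hμ1 hη hη1 hfine' i hheavy
    rw [hμt']
    exact ⟨(mul_le_mul_of_nonneg_right hlow (hμ0 i)).trans hμt_low,
      hμt_high.trans (mul_le_mul_of_nonneg_right hhigh (hμ0 i))⟩

/-- Let `n = 2^m`, `μ` a distribution over `[n]` (indexed here by
`Fin n`, so leaf `i : Fin n` is the `(i+1)`-st element), and `α` an `ε`-fine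
assignment of values in `[0,1]` to the internal nodes `(l,t)` (`l < m`, `t < 2^l`) of
the dyadic tree. Then the reconstituted distribution `μ̃` sums to `1` and is
`2ε`-fine with respect to `μ`. At level `l`, the node on the root-to-leaf path of `i`
is `(l, i / 2^(m-l))`, and `i` lies in its left child iff `i / 2^(m-l-1)` is even. -/
theorem stmt_10 (m : ℕ) (hm : 1 ≤ m) (n : ℕ) (hn : n = 2 ^ m)
    (ε : ℝ) (hε : 0 < ε) (hε1 : ε ≤ 1)
    (μ : Fin n → ℝ) (hμ0 : ∀ i, 0 ≤ μ i) (hμ1 : ∑ i, μ i = 1)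
    (α : ℕ → ℕ → ℝ) (hα0 : ∀ l t, 0 ≤ α l t) (hα1 : ∀ l t, α l t ≤ 1)
    (μL μR : ℕ → ℕ → ℝ)
    (hμL : ∀ l t, μL l t = ∑ i ∈ univ.filter (fun i : Fin n =>
        2 * t * 2 ^ (m - (l + 1)) ≤ (i : ℕ) ∧ (i : ℕ) < (2 * t + 1) * 2 ^ (m - (l + 1))), μ i)
    (hμR : ∀ l t, μR l t = ∑ i ∈ univ.filter (fun i : Fin n =>
        (2 * t + 1) * 2 ^ (m - (l + 1)) ≤ (i : ℕ) ∧ (i : ℕ) < (2 * t + 2) * 2 ^ (m - (l + 1))), μ i)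
    (hfine : ∀ l t, l < m → t < 2 ^ l → 0 < μL l t + μR l t →
      |α l t - μL l t / (μL l t + μR l t)| ≤ (ε / (2 * m)) ^ 2)
    (μt : Fin n → ℝ)
    (hμt : ∀ i : Fin n, μt i = ∏ l ∈ range m,
      (if ((i : ℕ) / 2 ^ (m - (l + 1))) % 2 = 0
        then α l ((i : ℕ) / 2 ^ (m - l))
        else 1 - α l ((i : ℕ) / 2 ^ (m - l)))) :
    (∑ i, μt i = 1) ∧
    ∃ B : Finset (Fin n), (∑ i ∈ B, μ i) ≤ 2 * ε ∧
      ∀ i ∉ B, (1 - 2 * ε) * μ i ≤ μt i ∧ μt i ≤ (1 + 2 * ε) * μ i :=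
  stmt_10_general m hm n hn ε hε hε1 μ hμ0 hμ1 α μL μR hμL hμR hfine μt hμt
end

section
/- Let ε > 0 and let μ, μ̃ be distributions over [n] such that μ̃ is ε-fine with respect to μ. Then the variation distance satisfies d(μ, μ̃) ≤ 4ε. -/
open Finset

/-- If `μ̃` is an `ε`-fine distribution with respect to `μ`, then
the variation distance satisfies `d(μ, μ̃) ≤ 4ε`. -/
theorem stmt_11 (n : ℕ) (ε : ℝ) (hε : 0 < ε)
    (μ μt : Fin n → ℝ)
    (hμ0 : ∀ i, 0 ≤ μ i) (hμ1 : ∑ i, μ i = 1)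
    (hμt0 : ∀ i, 0 ≤ μt i) (hμt1 : ∑ i, μt i = 1)
    (B : Finset (Fin n)) (hB : ∑ i ∈ B, μ i ≤ ε)
    (hfine : ∀ i ∉ B, (1 - ε) * μ i ≤ μt i ∧ μt i ≤ (1 + ε) * μ i) :
    (1 / 2) * ∑ i, |μ i - μt i| ≤ 4 * ε := by
  have hsplit : ∀ f : Fin n → ℝ, ∑ i ∈ B, f i + ∑ i ∈ Bᶜ, f i = ∑ i, f i :=
    fun f => Finset.sum_add_sum_compl B f
  rcases le_or_gt (1/2 : ℝ) ε with hcase | hcase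
  · -- trivial case: total sum ≤ 2 ≤ 4ε
    have h1 : ∑ i, |μ i - μt i| ≤ ∑ i, (μ i + μt i) := by
      apply Finset.sum_le_sum
      intro i _
      have := hμ0 i; have := hμt0 i
      rw [abs_le]; constructor <;> linarith
    have h2 : ∑ i, (μ i + μt i) = 2 := by
      rw [Finset.sum_add_distrib, hμ1, hμt1]; norm_num
    linarith
  · -- main case: ε < 1/2
    have h1ε : (0:ℝ) ≤ 1 - ε := by linarith
    -- complement bound
    have hc : ∑ i ∈ Bᶜ, |μ i - μt i| ≤ ε * ∑ i ∈ Bᶜ, μ i := by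
      rw [Finset.mul_sum]
      apply Finset.sum_le_sum
      intro i hi
      have hi' : i ∉ B := Finset.mem_compl.mp hi
      obtain ⟨hlo, hhi⟩ := hfine i hi'
      rw [abs_le]; constructor <;> nlinarith
    have hμc : ∑ i ∈ Bᶜ, μ i ≤ 1 := by
      have := hsplit μ
      have hBnn : 0 ≤ ∑ i ∈ B, μ i := Finset.sum_nonneg fun i _ => hμ0 i
      linarith
    have hμcge : 1 - ε ≤ ∑ i ∈ Bᶜ, μ i := by
      have := hsplit μ; linarith
    -- μt on complement is large
    have hμtc : (1 - ε) * (1 - ε) ≤ ∑ i ∈ Bᶜ, μt i := by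
      calc (1-ε)*(1-ε) ≤ (1-ε) * ∑ i ∈ Bᶜ, μ i := by nlinarith
        _ = ∑ i ∈ Bᶜ, (1-ε) * μ i := by rw [Finset.mul_sum]
        _ ≤ ∑ i ∈ Bᶜ, μt i :=
            Finset.sum_le_sum fun i hi => (hfine i (Finset.mem_compl.mp hi)).1
    have hμtB : ∑ i ∈ B, μt i ≤ 2*ε := by
      have := hsplit μt; nlinarith
    have hb : ∑ i ∈ B, |μ i - μt i| ≤ ∑ i ∈ B, (μ i + μt i) := by
      apply Finset.sum_le_sum
      intro i _
      have := hμ0 i; have := hμt0 i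
      rw [abs_le]; constructor <;> linarith
    have hb2 : ∑ i ∈ B, (μ i + μt i) ≤ 3*ε := by
      rw [Finset.sum_add_distrib]; linarith
    have htot := hsplit (fun i => |μ i - μt i|)
    have hcε : ε * ∑ i ∈ Bᶜ, μ i ≤ ε := by nlinarith
    linarith
end

section
/- Let 0 < ε ≤ 1/5, let μ be a distribution over [n], and let μ̃ be a distribution over [n] that is ε-fine with respect to μ, with witness set B ⊆ [n] (so μ(B) ≤ ε and (1−ε)·μ(i) ≤ μ̃(i) ≤ (1+ε)·μ(i) for all i ∉ B). Define the ε-trimmed values μ̄(i) for i ∈ [n] by: μ̄(i) = 0 if i ∈ B or μ̃(i) < ε/n; otherwise μ̄(i) = (1+ε)^{j−1}·ε/n where j ≥ 1 is the largest integer with (1+ε)^{j−1}·ε/n ≤ μ̃(i). Then ∑_{i=1}^n μ̄(i) > 0, so the ε-renormalized distribution μ̂ given by μ̂(i) = μ̄(i)/∑_{i'=1}^n μ̄(i') is well-defined, and the variation distance satisfies d(μ̂, μ) ≤ 5ε. -/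
open Finset

set_option maxHeartbeats 1000000 in
/-- Let `μ̃` be `ε`-fine with respect to `μ` with witness set `B`,
and let `μ̄` be the `ε`-trimmed values: `μ̄(i) = 0` if `i ∈ B` or `μ̃(i) < ε/n`, and
otherwise `μ̄(i) = (1+ε)^{j−1}·ε/n` for the largest `j ≥ 1` with
`(1+ε)^{j−1}·ε/n ≤ μ̃(i)`. Then `∑ μ̄ > 0`, and the `ε`-renormalized distribution
`μ̂(i) = μ̄(i)/∑ μ̄` satisfies `d(μ̂, μ) ≤ 5ε`. -/
theorem stmt_13 (n : ℕ) (hn : 0 < n) (ε : ℝ) (hε : 0 < ε) (hε1 : ε ≤ 1 / 5)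
    (μ μt : Fin n → ℝ)
    (hμ0 : ∀ i, 0 ≤ μ i) (hμ1 : ∑ i, μ i = 1)
    (hμt0 : ∀ i, 0 ≤ μt i) (hμt1 : ∑ i, μt i = 1)
    (B : Finset (Fin n)) (hB : ∑ i ∈ B, μ i ≤ ε)
    (hfine : ∀ i ∉ B, (1 - ε) * μ i ≤ μt i ∧ μt i ≤ (1 + ε) * μ i)
    (μb : Fin n → ℝ)
    (hμb0 : ∀ i : Fin n, (i ∈ B ∨ μt i < ε / n) → μb i = 0)
    (hμb1 : ∀ i : Fin n, i ∉ B → ε / n ≤ μt i →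
      ∃ j : ℕ, 1 ≤ j ∧ μb i = (1 + ε) ^ (j - 1) * ε / n ∧
        (1 + ε) ^ (j - 1) * ε / n ≤ μt i ∧ μt i < (1 + ε) ^ j * ε / n) :
    0 < ∑ i, μb i ∧
    (1 / 2) * ∑ i, |μb i / (∑ i', μb i') - μ i| ≤ 5 * ε := by
  classical
  have hn' : (0 : ℝ) < n := by exact_mod_cast hn
  have hεn : 0 < ε / n := by positivity
  have h1ε : (0:ℝ) < 1 + ε := by linarith
  have h1ε' : (0:ℝ) < 1 - ε := by linarith
  -- elementwise facts
  have hb_nonneg : ∀ i, 0 ≤ μb i := by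
    intro i
    by_cases hiB : i ∈ B
    · rw [hμb0 i (Or.inl hiB)]
    by_cases hlt : μt i < ε / n
    · rw [hμb0 i (Or.inr hlt)]
    · obtain ⟨j, hj1, hbe, hle, _⟩ := hμb1 i hiB (le_of_not_gt hlt)
      rw [hbe]; positivity
  have hb_le : ∀ i, μb i ≤ μt i := by
    intro i
    by_cases hiB : i ∈ B
    · rw [hμb0 i (Or.inl hiB)]; exact hμt0 i
    by_cases hlt : μt i < ε / n
    · rw [hμb0 i (Or.inr hlt)]; exact hμt0 i
    · obtain ⟨j, hj1, hbe, hle, _⟩ := hμb1 i hiB (le_of_not_gt hlt)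
      rw [hbe]; exact hle
  have hb_up : ∀ i ∉ B, ε / n ≤ μt i → μt i ≤ (1 + ε) * μb i := by
    intro i hiB hge
    obtain ⟨j, hj1, hbe, _, hub⟩ := hμb1 i hiB hge
    have hpow : (1 + ε) ^ j = (1 + ε) * (1 + ε) ^ (j - 1) := by
      conv_lhs => rw [show j = (j - 1) + 1 from (Nat.succ_pred_eq_of_pos hj1).symm]
      ring
    rw [hbe]
    calc μt i ≤ (1 + ε) ^ j * ε / n := le_of_lt hub
      _ = (1 + ε) * ((1 + ε) ^ (j - 1) * ε / n) := by rw [hpow]; ring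
  set S : ℝ := ∑ i, μb i with hS
  have hS_le : S ≤ 1 := by
    rw [hS, ← hμt1]; exact Finset.sum_le_sum fun i _ => hb_le i
  -- the good set
  set p : Fin n → Prop := fun i => ε / n ≤ μt i with hp
  have hμBc : (1 : ℝ) - ε ≤ ∑ i ∈ Bᶜ, μ i := by
    have := Finset.sum_add_sum_compl B μ
    rw [hμ1] at this
    linarith
  have hμtBc : (1 - ε) * (1 - ε) ≤ ∑ i ∈ Bᶜ, μt i := by
    calc (1 - ε) * (1 - ε) ≤ (1 - ε) * ∑ i ∈ Bᶜ, μ i := by nlinarith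
      _ = ∑ i ∈ Bᶜ, (1 - ε) * μ i := by rw [Finset.mul_sum]
      _ ≤ ∑ i ∈ Bᶜ, μt i := Finset.sum_le_sum fun i hi =>
          (hfine i (Finset.mem_compl.mp hi)).1
  have hsplit : ∑ i ∈ Bᶜ.filter p, μt i + ∑ i ∈ Bᶜ.filter (fun i => ¬ p i), μt i
      = ∑ i ∈ Bᶜ, μt i := Finset.sum_filter_add_sum_filter_not _ _ _
  have hsmall : ∑ i ∈ Bᶜ.filter (fun i => ¬ p i), μt i ≤ ε := by
    have h1 : ∑ i ∈ Bᶜ.filter (fun i => ¬ p i), μt i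
        ≤ (Bᶜ.filter (fun i => ¬ p i)).card • (ε / n) := by
      apply Finset.sum_le_card_nsmul
      intro i hi
      have := (Finset.mem_filter.mp hi).2
      exact le_of_lt (lt_of_not_ge this)
    have hcard : ((Bᶜ.filter (fun i => ¬ p i)).card : ℝ) ≤ n := by
      have h2 : (Bᶜ.filter (fun i => ¬ p i)).card ≤ n := by
        simpa using Finset.card_le_card (Finset.subset_univ (Bᶜ.filter (fun i => ¬ p i)))
      exact_mod_cast h2
    have : ((Bᶜ.filter (fun i => ¬ p i)).card : ℝ) * (ε / n) ≤ n * (ε / n) := by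
      apply mul_le_mul_of_nonneg_right hcard (le_of_lt hεn)
    rw [nsmul_eq_mul] at h1
    have hne : (n : ℝ) ≠ 0 := ne_of_gt hn'
    calc ∑ i ∈ Bᶜ.filter (fun i => ¬ p i), μt i ≤ (n : ℝ) * (ε / n) := le_trans h1 this
      _ = ε := by field_simp
  have hGμt : (1 - ε) * (1 - ε) - ε ≤ ∑ i ∈ Bᶜ.filter p, μt i := by linarith
  have hGb : ∑ i ∈ Bᶜ.filter p, μt i ≤ (1 + ε) * ∑ i ∈ Bᶜ.filter p, μb i := by
    rw [Finset.mul_sum]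
    apply Finset.sum_le_sum
    intro i hi
    obtain ⟨hi1, hi2⟩ := Finset.mem_filter.mp hi
    exact hb_up i (Finset.mem_compl.mp hi1) hi2
  have hGS : ∑ i ∈ Bᶜ.filter p, μb i ≤ S := by
    rw [hS]
    exact Finset.sum_le_sum_of_subset_of_nonneg (Finset.subset_univ _)
      (fun i _ _ => hb_nonneg i)
  have hSlow : (1 - ε) * (1 - ε) - ε ≤ (1 + ε) * S := by nlinarith
  have hSpos : 0 < S := by nlinarith
  have hS4 : 1 - S ≤ 4 * ε := by nlinarith
  refine ⟨hSpos, ?_⟩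
  -- bound ∑ |μb i - μ i|
  have habs : ∀ i, |μb i / S - μ i| ≤ μb i * (1 / S - 1) + |μb i - μ i| := by
    intro i
    have hSinv : 1 ≤ 1 / S := by rw [le_div_iff₀ hSpos]; linarith
    have heq : μb i / S - μb i = μb i * (1 / S - 1) := by ring
    have h2 : |μb i / S - μb i| = μb i * (1 / S - 1) := by
      rw [heq, abs_of_nonneg (mul_nonneg (hb_nonneg i) (by linarith))]
    calc |μb i / S - μ i| ≤ |μb i / S - μb i| + |μb i - μ i| := abs_sub_le _ _ _
      _ = μb i * (1 / S - 1) + |μb i - μ i| := by rw [h2]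
  have hsum1 : ∑ i, μb i * (1 / S - 1) = 1 - S := by
    rw [← Finset.sum_mul, ← hS, mul_sub, mul_one, mul_one_div_cancel (ne_of_gt hSpos)]
  -- split ∑ |μb - μ|
  have hBpart : ∑ i ∈ B, |μb i - μ i| ≤ ε := by
    calc ∑ i ∈ B, |μb i - μ i| = ∑ i ∈ B, μ i := by
          apply Finset.sum_congr rfl
          intro i hi
          rw [hμb0 i (Or.inl hi)]
          rw [abs_of_nonpos (by linarith [hμ0 i])]
          ring
      _ ≤ ε := hB
  have hSmallpart : ∑ i ∈ Bᶜ.filter (fun i => ¬ p i), |μb i - μ i| ≤ 5 / 4 * ε := by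
    have h1 : ∑ i ∈ Bᶜ.filter (fun i => ¬ p i), |μb i - μ i|
        ≤ (Bᶜ.filter (fun i => ¬ p i)).card • (ε / n / (1 - ε)) := by
      apply Finset.sum_le_card_nsmul
      intro i hi
      obtain ⟨hi1, hi2⟩ := Finset.mem_filter.mp hi
      have hiB := Finset.mem_compl.mp hi1
      have hlt : μt i < ε / n := lt_of_not_ge hi2
      have hμi : μ i ≤ ε / n / (1 - ε) := by
        have hf := (hfine i hiB).1
        rw [le_div_iff₀ h1ε']
        nlinarith
      rw [hμb0 i (Or.inr hlt), abs_of_nonpos (by linarith [hμ0 i])]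
      linarith
    have hcard : ((Bᶜ.filter (fun i => ¬ p i)).card : ℝ) ≤ n := by
      have h2 : (Bᶜ.filter (fun i => ¬ p i)).card ≤ n := by
        simpa using Finset.card_le_card (Finset.subset_univ (Bᶜ.filter (fun i => ¬ p i)))
      exact_mod_cast h2
    rw [nsmul_eq_mul] at h1
    have hq : (0:ℝ) ≤ ε / n / (1 - ε) := by positivity
    have h3 : ((Bᶜ.filter (fun i => ¬ p i)).card : ℝ) * (ε / n / (1 - ε))
        ≤ n * (ε / n / (1 - ε)) := mul_le_mul_of_nonneg_right hcard hq
    have hne : (n : ℝ) ≠ 0 := ne_of_gt hn'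
    have h4 : (n:ℝ) * (ε / n / (1 - ε)) = ε / (1 - ε) := by
      field_simp
    have h5 : ε / (1 - ε) ≤ 5 / 4 * ε := by
      rw [div_le_iff₀ h1ε']
      nlinarith [mul_nonneg hε.le (show (0:ℝ) ≤ 1/5 - ε by linarith)]
    linarith
  have hGpart : ∑ i ∈ Bᶜ.filter p, |μb i - μ i| ≤ 2 * ε := by
    have h1 : ∑ i ∈ Bᶜ.filter p, |μb i - μ i| ≤ ∑ i ∈ Bᶜ.filter p, 2 * ε * μ i := by
      apply Finset.sum_le_sum
      intro i hi
      obtain ⟨hi1, hi2⟩ := Finset.mem_filter.mp hi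
      have hiB := Finset.mem_compl.mp hi1
      obtain ⟨hf1, hf2⟩ := hfine i hiB
      have hup := hb_up i hiB hi2
      have hlo := hb_le i
      have hμi := hμ0 i
      rw [abs_le]
      constructor
      · nlinarith [mul_nonneg (mul_nonneg hε.le hε.le) hμi, mul_nonneg hε.le hμi]
      · nlinarith [mul_nonneg hε.le hμi]
    have h2 : ∑ i ∈ Bᶜ.filter p, 2 * ε * μ i ≤ 2 * ε := by
      rw [← Finset.mul_sum]
      have : ∑ i ∈ Bᶜ.filter p, μ i ≤ 1 := by
        rw [← hμ1]
        exact Finset.sum_le_sum_of_subset_of_nonneg (Finset.subset_univ _)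
          (fun i _ _ => hμ0 i)
      nlinarith
    linarith
  have hsplit2 : ∑ i, |μb i - μ i| = ∑ i ∈ B, |μb i - μ i| + ∑ i ∈ Bᶜ, |μb i - μ i| :=
    (Finset.sum_add_sum_compl B _).symm
  have hsplit3 : ∑ i ∈ Bᶜ, |μb i - μ i|
      = ∑ i ∈ Bᶜ.filter p, |μb i - μ i| + ∑ i ∈ Bᶜ.filter (fun i => ¬ p i), |μb i - μ i| :=
    (Finset.sum_filter_add_sum_filter_not _ _ _).symm
  have hsumabs : ∑ i, |μb i - μ i| ≤ ε + 5 / 4 * ε + 2 * ε := by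
    rw [hsplit2, hsplit3]; linarith
  have hfinal : ∑ i, |μb i / S - μ i| ≤ (1 - S) + (ε + 5 / 4 * ε + 2 * ε) := by
    calc ∑ i, |μb i / S - μ i| ≤ ∑ i, (μb i * (1 / S - 1) + |μb i - μ i|) :=
          Finset.sum_le_sum fun i _ => habs i
      _ = (1 - S) + ∑ i, |μb i - μ i| := by rw [Finset.sum_add_distrib, hsum1]
      _ ≤ (1 - S) + (ε + 5 / 4 * ε + 2 * ε) := by linarith
  linarith
end
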